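/- arXiv:2010.00405 — 3 statements merged into one kernel-verified Lean document; each statement's English description precedes it below -/
import Mathlib

section
/- Let (X,μ) be a σ-finite measure space and Γ a countable group of invertible nonsingular transformations of (X,μ) with μ(X) < ∞. If for a.e. x ∈ X the sum over γ ∈ Γ of the Radon–Nikodym derivatives d(μ∘γ)/dμ(x) is infinite, then Γ is conservative: for every measurable B with μ(B) > 0 and a.e. x ∈ B there exists γ ∈ Γ, γ ≠ e, with γx ∈ B. -/
/-!
Let `W ⊆ B` be the set of points of `B` that never return to `B`. Its translates `γ⁻¹ W` are
pairwise disjoint, so `∑ γ, μ (γ⁻¹ W) ≤ μ X < ∞`. On the other hand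
`∑ γ, μ (γ⁻¹ W) = ∫_W ∑ γ, d(μ ∘ γ)/dμ dμ = ∞ · μ W`, hence `μ W = 0`.
-/

open MeasureTheory Function

section RadonNikodym

variable {X : Type*} [MeasurableSpace X]

theorem setLIntegral_tsum_rnDeriv {ι : Type*} [Countable ι] (μ : Measure X) [SFinite μ]
    (ν : ι → Measure X) [∀ i, (ν i).HaveLebesgueDecomposition μ] (hν : ∀ i, ν i ≪ μ)
    (s : Set X) : ∫⁻ x in s, ∑' i, (ν i).rnDeriv μ x ∂μ = ∑' i, ν i s := by
  rw [lintegral_tsum fun i => (Measure.measurable_rnDeriv _ _).aemeasurable]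
  exact tsum_congr fun i => Measure.setLIntegral_rnDeriv (hν i) s

theorem measure_eq_zero_of_tsum_rnDeriv_map_eq_top {ι : Type*} [Countable ι] (μ : Measure X)
    [IsFiniteMeasure μ] {f : ι → X → X} (hf : ∀ i, Measurable (f i))
    (hf_ac : ∀ i, μ.map (f i) ≪ μ) {s : Set X} (hs : MeasurableSet s)
    (hdisj : Pairwise (Disjoint on fun i => f i ⁻¹' s))
    (hsum : ∀ᵐ x ∂μ.restrict s, ∑' i, (μ.map (f i)).rnDeriv μ x = ⊤) : μ s = 0 := by
  by_contra hs_ne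
  have : (⊤ : ENNReal) < ⊤ :=
    calc (⊤ : ENNReal) = ∫⁻ _ in s, ⊤ ∂μ := by rw [setLIntegral_const, ENNReal.top_mul hs_ne]
      _ = ∫⁻ x in s, ∑' i, (μ.map (f i)).rnDeriv μ x ∂μ :=
        lintegral_congr_ae (hsum.mono fun _ hx => hx.symm)
      _ = ∑' i, μ (f i ⁻¹' s) := by
        rw [setLIntegral_tsum_rnDeriv μ _ hf_ac]
        exact tsum_congr fun i => Measure.map_apply (hf i) hs
      _ = μ (⋃ i, f i ⁻¹' s) := (measure_iUnion hdisj fun i => hf i hs).symm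
      _ < ⊤ := measure_lt_top μ _
  exact lt_irrefl _ this

end RadonNikodym

section ReturnFreePart

variable {G X : Type*} [Group G] [MulAction G X]

variable (G) in
def returnFreePart (B : Set X) : Set X :=
  {x ∈ B | ∀ γ : G, γ ≠ 1 → γ • x ∉ B}

theorem returnFreePart_eq (B : Set X) :
    returnFreePart G B = B ∩ ⋂ (γ : G) (_ : γ ≠ 1), (γ • ·) ⁻¹' Bᶜ := by
  ext x
  simp [returnFreePart]

theorem measurableSet_returnFreePart [MeasurableSpace X] [Countable G]
    (hmeas : ∀ γ : G, Measurable (γ • · : X → X)) {B : Set X} (hB : MeasurableSet B) :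
    MeasurableSet (returnFreePart G B) := by
  rw [returnFreePart_eq]
  exact hB.inter <| .iInter fun γ => .iInter fun _ => hmeas γ hB.compl

theorem pairwise_disjoint_preimage_smul_returnFreePart (B : Set X) :
    Pairwise (Disjoint on fun γ : G => (γ • ·) ⁻¹' returnFreePart G B) := by
  intro γ δ hγδ
  refine Set.disjoint_left.mpr fun x hγx hδx => hδx.2 (γ * δ⁻¹) ?_ ?_
  · exact fun h => hγδ (mul_inv_eq_one.mp h)
  · simpa [smul_smul] using hγx.1

end ReturnFreePart

theorem stmt4 {X : Type*} [MeasurableSpace X] (μ : Measure X) [IsFiniteMeasure μ]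
    {G : Type*} [Group G] [Countable G] [MulAction G X]
    (hmeas : ∀ γ : G, Measurable (fun x : X => γ • x))
    (hns : ∀ γ : G, μ.map (fun x : X => γ • x) ≪ μ ∧ μ ≪ μ.map (fun x : X => γ • x))
    (hsum : ∀ᵐ x ∂μ, ∑' γ : G, (μ.map (fun x : X => γ • x)).rnDeriv μ x = ⊤) :
    ∀ B : Set X, MeasurableSet B → 0 < μ B →
      ∀ᵐ x ∂μ.restrict B, ∃ γ : G, γ ≠ 1 ∧ γ • x ∈ B := by
  intro B hB _
  have hW : μ (returnFreePart G B) = 0 :=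
    measure_eq_zero_of_tsum_rnDeriv_map_eq_top μ hmeas (fun γ => (hns γ).1)
      (measurableSet_returnFreePart hmeas hB) (pairwise_disjoint_preimage_smul_returnFreePart B)
      (ae_restrict_of_ae hsum)
  rw [ae_restrict_iff' hB]
  filter_upwards [measure_eq_zero_iff_ae_notMem.mp hW] with x hxW hxB
  simpa [returnFreePart, hxB] using hxW
end

section
/- Let Γ be a countable group, (μ_γ)_{γ∈Γ} a family of probability densities relative to a probability measure P, and (b_γ)_{γ∈Γ} positive reals with Σ_γ b_γ = ∞ and Σ_γ b_γ² · E[(dP/dP_γ)²] < ∞, where P_γ ≪∼ P. Then for P-a.e. ω, dP_γ/dP(ω) ≥ b_γ for all but finitely many γ, and consequently Σ_γ dP_γ/dP(ω) = +∞ a.e. -/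
/-!
If the density `dP_γ/dP` falls below `b_γ`, then `dP/dP_γ = (dP_γ/dP)⁻¹` exceeds `b_γ⁻¹`, so by
Markov's inequality this happens with probability at most `b_γ² E[(dP/dP_γ)²]`. These bounds are
summable, so by Borel–Cantelli almost every `ω` has `dP_γ/dP(ω) ≥ b_γ` for all but finitely many
`γ`; comparing with the divergent series `∑ b_γ` gives `∑ dP_γ/dP(ω) = ∞`.
-/

open MeasureTheory Filter
open scoped ENNReal

namespace ENNReal

lemma tsum_ofReal_eq_top_of_not_summable {ι : Type*} {f : ι → ℝ} (hf : ∀ i, 0 ≤ f i)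
    (h : ¬Summable f) : ∑' i, ENNReal.ofReal (f i) = ∞ := by
  by_contra hne
  exact h (by simpa [ENNReal.toReal_ofReal (hf _)] using ENNReal.summable_toReal hne)

lemma tsum_eq_top_of_eventually_le {ι : Type*} {f g : ι → ℝ≥0∞} (hg : ∑' i, g i = ∞)
    (hg_ne_top : ∀ i, g i ≠ ∞) (hle : ∀ᶠ i in cofinite, g i ≤ f i) : ∑' i, f i = ∞ := by
  set s := (eventually_cofinite.mp hle).toFinset
  have hs : ∑ i ∈ s, g i ≠ ∞ := (ENNReal.sum_lt_top.mpr fun i _ => (hg_ne_top i).lt_top).ne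
  have hcompl : ∑' i : ↥(s : Set ι)ᶜ, g i ≤ ∑' i, f i :=
    calc ∑' i : ↥(s : Set ι)ᶜ, g i ≤ ∑' i : ↥(s : Set ι)ᶜ, f i :=
          ENNReal.tsum_le_tsum fun i => not_not.mp (by simpa [s] using i.2)
      _ ≤ ∑' i, f i := ENNReal.tsum_comp_le_tsum_of_injective Subtype.val_injective f
  rw [← ENNReal.sum_add_tsum_compl s g] at hg
  by_contra hf
  exact ENNReal.add_ne_top.mpr ⟨hs, ne_top_of_le_ne_top hf hcompl⟩ hg

end ENNReal

namespace MeasureTheory.Measure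

lemma measure_rnDeriv_lt_le {Ω : Type*} [MeasurableSpace Ω] {μ ν : Measure Ω}
    [SigmaFinite μ] [SigmaFinite ν] (hμν : μ ≪ ν) {c : ℝ≥0∞} (hc : c ≠ ∞) :
    μ {ω | ν.rnDeriv μ ω < c} ≤ c ^ 2 * ∫⁻ ω, μ.rnDeriv ν ω ^ 2 ∂μ := by
  rcases eq_or_ne c 0 with rfl | hc0
  · simp
  have hsub : {ω | ν.rnDeriv μ ω < c} ≤ᵐ[μ] {ω | c⁻¹ ^ 2 ≤ μ.rnDeriv ν ω ^ 2} := by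
    filter_upwards [inv_rnDeriv hμν] with ω hω hlt
    have hinv : (μ.rnDeriv ν ω)⁻¹ < c := by rw [← Pi.inv_apply, hω]; exact hlt
    exact pow_le_pow_left₀ zero_le (ENNReal.inv_lt_iff_inv_lt.mp hinv).le 2
  have hmarkov := meas_ge_le_lintegral_div
    ((measurable_rnDeriv μ ν).pow_const 2).aemeasurable (μ := μ)
    (pow_ne_zero 2 (ENNReal.inv_ne_zero.mpr hc)) (ENNReal.pow_ne_top (ENNReal.inv_ne_top.mpr hc0))
  calc μ {ω | ν.rnDeriv μ ω < c} ≤ μ {ω | c⁻¹ ^ 2 ≤ μ.rnDeriv ν ω ^ 2} := measure_mono_ae hsub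
    _ ≤ (∫⁻ ω, μ.rnDeriv ν ω ^ 2 ∂μ) / c⁻¹ ^ 2 := hmarkov
    _ = c ^ 2 * ∫⁻ ω, μ.rnDeriv ν ω ^ 2 ∂μ := by
      rw [ENNReal.div_eq_inv_mul, ← ENNReal.inv_pow, inv_inv]

end MeasureTheory.Measure

theorem stmt5_general {Ω : Type*} [MeasurableSpace Ω] (P : Measure Ω) [IsProbabilityMeasure P]
    {G : Type*} [Countable G] (Pm : G → Measure Ω) [∀ γ, IsProbabilityMeasure (Pm γ)]
    (habs' : ∀ γ, P ≪ Pm γ)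
    (b : G → ℝ) (hb : ∀ γ, 0 < b γ)
    (hdiv : ¬ Summable b)
    (hsq : ∑' γ : G, ENNReal.ofReal (b γ) ^ 2 * ∫⁻ ω, (P.rnDeriv (Pm γ) ω) ^ 2 ∂P ≠ ⊤) :
    ∀ᵐ ω ∂P,
      (∀ᶠ γ in Filter.cofinite, ENNReal.ofReal (b γ) ≤ (Pm γ).rnDeriv P ω) ∧
      ∑' γ : G, (Pm γ).rnDeriv P ω = ⊤ := by
  have hbad : ∑' γ, P {ω | (Pm γ).rnDeriv P ω < ENNReal.ofReal (b γ)} ≠ ⊤ :=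
    ne_top_of_le_ne_top hsq <| ENNReal.tsum_le_tsum fun γ =>
      Measure.measure_rnDeriv_lt_le (habs' γ) ENNReal.ofReal_ne_top
  have hb_top : ∑' γ, ENNReal.ofReal (b γ) = ⊤ :=
    ENNReal.tsum_ofReal_eq_top_of_not_summable (fun γ => (hb γ).le) hdiv
  filter_upwards [ae_finite_setOfPred_mem hbad] with ω hω
  have hev : ∀ᶠ γ in cofinite, ENNReal.ofReal (b γ) ≤ (Pm γ).rnDeriv P ω :=
    eventually_cofinite.mpr (by simpa only [not_le] using hω)
  exact ⟨hev, ENNReal.tsum_eq_top_of_eventually_le hb_top (fun _ => ENNReal.ofReal_ne_top) hev⟩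

theorem stmt5 {Ω : Type*} [MeasurableSpace Ω] (P : Measure Ω) [IsProbabilityMeasure P]
    {G : Type*} [Countable G] (Pm : G → Measure Ω) [∀ γ, IsProbabilityMeasure (Pm γ)]
    (habs : ∀ γ, Pm γ ≪ P) (habs' : ∀ γ, P ≪ Pm γ)
    (b : G → ℝ) (hb : ∀ γ, 0 < b γ)
    (hdiv : ¬ Summable b)
    (hsq : ∑' γ : G, ENNReal.ofReal (b γ) ^ 2 * ∫⁻ ω, (P.rnDeriv (Pm γ) ω) ^ 2 ∂P ≠ ⊤) :
    ∀ᵐ ω ∂P,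
      (∀ᶠ γ in Filter.cofinite, ENNReal.ofReal (b γ) ≤ (Pm γ).rnDeriv P ω) ∧
      ∑' γ : G, (Pm γ).rnDeriv P ω = ⊤ :=
  stmt5_general P Pm habs' b hb hdiv hsq
end

section
/- Let (X,ν) be a σ-finite measure space, T : X → X an invertible ν-preserving transformation, X = ⊔ₙ Xₙ a countable partition into T-invariant sets, and f = 1 + Σₙ (λₙ − 1)·1_{Aₙ} with Aₙ ⊂ Xₙ, ν(Aₙ) < ∞, λₙ > 0. Let μ have density f with respect to ν. Then ∫_X |d(μ∘T⁻¹)/dμ − 1| dμ = Σₙ |1 − λₙ|·ν(Aₙ △ T Aₙ), and if this sum is finite then ∫_X (d(μ∘T⁻¹)/dμ − 1) dμ = 0. -/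
/-!
Since `ν` is `T`-invariant and `μ = f • ν` with `f > 0`, the Radon–Nikodym derivative of `μ ∘ T⁻¹`
with respect to `μ` is `(f ∘ T⁻¹) / f`, so both integrals over `μ` become integrals over `ν` of
`f ∘ T⁻¹ - f`. On each invariant piece `Xₙ` this difference is `(λₙ - 1)(1_{T Aₙ} - 1_{Aₙ})`, whose
absolute value is `|1 - λₙ| 1_{Aₙ △ T Aₙ}` and whose integral vanishes because `ν (T Aₙ) = ν Aₙ`.
-/

open MeasureTheory
open scoped ENNReal

theorem enorm_mul_eq_ofReal_abs_mul_toReal (c : ℝ) {a : ℝ≥0∞} (ha : a ≠ ∞) :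
    ‖c‖ₑ * a = ENNReal.ofReal (|c| * a.toReal) := by
  rw [ENNReal.ofReal_mul (abs_nonneg c), ENNReal.ofReal_toReal ha, Real.enorm_eq_ofReal_abs]

theorem hasSum_of_support_subset_partition {ι X M : Type*} [AddCommMonoid M] [TopologicalSpace M]
    {Y : ι → Set X} (hY : Pairwise (Function.onFun Disjoint Y)) {g : ι → X → M}
    (hg : ∀ i, Function.support (g i) ⊆ Y i) {x : X} {i : ι} (hx : x ∈ Y i) :
    HasSum (g · x) (g i x) :=
  hasSum_single i fun j hji => Function.notMem_support.mp fun hxj =>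
    Set.disjoint_left.mp (hY hji) (hg j hxj) hx

theorem enorm_tsum_of_support_subset_partition {ι X E : Type*} [NormedAddCommGroup E]
    {Y : ι → Set X} (hY : Pairwise (Function.onFun Disjoint Y)) {g : ι → X → E}
    (hg : ∀ i, Function.support (g i) ⊆ Y i) {x : X} {i : ι} (hx : x ∈ Y i) :
    ‖∑' j, g j x‖ₑ = ∑' j, ‖g j x‖ₑ := by
  have hg' : ∀ j, Function.support (fun y => ‖g j y‖ₑ) ⊆ Y j := fun j y hy =>
    hg j (Function.mem_support.mpr fun h => hy (by simp [h]))
  rw [(hasSum_of_support_subset_partition hY hg hx).tsum_eq,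
    (hasSum_of_support_subset_partition hY hg' hx).tsum_eq]

theorem measurable_tsum_of_summable {X : Type*} [MeasurableSpace X] {g : ℕ → X → ℝ}
    (hg : ∀ n, Measurable (g n)) (hs : ∀ x, Summable (g · x)) :
    Measurable fun x => ∑' n, g n x :=
  measurable_of_tendsto_metrizable (fun _ => Finset.measurable_sum _ fun n _ => hg n)
    (tendsto_pi_nhds.mpr fun x => (hs x).hasSum.tendsto_sum_nat)

theorem enorm_indicator_sub_indicator {X E : Type*} [NormedAddCommGroup E] (s t : Set X) (c : E)
    (x : X) :
    ‖t.indicator (fun _ => c) x - s.indicator (fun _ => c) x‖ₑ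
      = (symmDiff s t).indicator (fun _ => ‖c‖ₑ) x := by
  by_cases hs : x ∈ s <;> by_cases ht : x ∈ t <;> simp [hs, ht, Set.mem_symmDiff]

section MeasurePreserving

variable {X : Type*} [MeasurableSpace X] {ν : Measure X} {T : X ≃ᵐ X}

theorem measure_image_of_measurePreserving (hT : MeasurePreserving T ν ν) (s : Set X) :
    ν (T '' s) = ν s := by
  rw [T.image_eq_preimage_symm, (hT.symm T).measure_preimage_equiv]

theorem integral_indicator_image_sub_indicator {E : Type*} [NormedAddCommGroup E] [NormedSpace ℝ E]
    [CompleteSpace E] (hT : MeasurePreserving T ν ν) {s : Set X} (hs : MeasurableSet s) (hνs : ν s ≠ ∞) (c : E) :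
    ∫ x, ((T '' s).indicator (fun _ => c) x - s.indicator (fun _ => c) x) ∂ν = 0 := by
  have hTs : MeasurableSet (T '' s) := T.measurableSet_image.mpr hs
  have hνTs : ν (T '' s) ≠ ∞ := by rwa [measure_image_of_measurePreserving hT]
  rw [integral_sub ((integrable_indicator_iff hTs).mpr (integrableOn_const hνTs))
      ((integrable_indicator_iff hs).mpr (integrableOn_const hνs)),
    integral_indicator_const _ hTs, integral_indicator_const _ hs, measureReal_def,
    measureReal_def, measure_image_of_measurePreserving hT, sub_self]

theorem map_withDensity_of_measurePreserving (hT : MeasurePreserving T ν ν) {g : X → ℝ≥0∞}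
    (hg : Measurable g) : (ν.withDensity g).map T = ν.withDensity (g ∘ T.symm) := by
  ext s hs
  rw [Measure.map_apply T.measurable hs, withDensity_apply _ (T.measurable hs),
    withDensity_apply _ hs]
  conv_rhs => rw [← hT.map_eq]
  rw [setLIntegral_map hs (hg.comp T.symm.measurable) T.measurable]
  simp

theorem rnDeriv_map_withDensity_ae_eq [SigmaFinite ν] (hT : MeasurePreserving T ν ν)
    {g : X → ℝ≥0∞} (hg : Measurable g) (hg0 : ∀ x, g x ≠ 0) (hgtop : ∀ x, g x ≠ ∞) :
    ((ν.withDensity g).map T).rnDeriv (ν.withDensity g)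
      =ᵐ[ν.withDensity g] fun x => g (T.symm x) / g x := by
  have : SigmaFinite (ν.withDensity g) := SigmaFinite.withDensity_of_ne_top (.of_forall hgtop)
  have hq : Measurable fun x => g (T.symm x) / g x := (hg.comp T.symm.measurable).div hg
  have hmap : (ν.withDensity g).map T
      = (ν.withDensity g).withDensity fun x => g (T.symm x) / g x := by
    rw [map_withDensity_of_measurePreserving hT hg, ← withDensity_mul ν hg hq]
    congr 1
    funext x
    exact (ENNReal.mul_div_cancel (hg0 x) (hgtop x)).symm
  rw [hmap]
  exact Measure.rnDeriv_withDensity _ hq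

theorem integral_comp_rnDeriv_map_withDensity [SigmaFinite ν] (hT : MeasurePreserving T ν ν)
    {f : X → ℝ} (hf : Measurable f) (hpos : ∀ x, 0 < f x) {μ : Measure X}
    (hμ : μ = ν.withDensity fun x => ENNReal.ofReal (f x)) (φ : ℝ → ℝ) :
    ∫ x, φ ((μ.map T).rnDeriv μ x).toReal ∂μ = ∫ x, f x * φ (f (T.symm x) / f x) ∂ν := by
  have hrn : (μ.map T).rnDeriv μ
      =ᵐ[μ] fun x => ENNReal.ofReal (f (T.symm x)) / ENNReal.ofReal (f x) :=
    hμ ▸ rnDeriv_map_withDensity_ae_eq hT hf.ennreal_ofReal (fun x => by simpa using hpos x)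
      fun _ => ENNReal.ofReal_ne_top
  calc ∫ x, φ ((μ.map T).rnDeriv μ x).toReal ∂μ
      = ∫ x, φ (ENNReal.ofReal (f (T.symm x)) / ENNReal.ofReal (f x)).toReal ∂μ :=
        integral_congr_ae (hrn.mono fun x hx => congrArg (fun r => φ r.toReal) hx)
    _ = ∫ x, f x * φ (f (T.symm x) / f x) ∂ν := by
        rw [hμ, integral_withDensity_eq_integral_toReal_smul hf.ennreal_ofReal
          (.of_forall fun _ => ENNReal.ofReal_lt_top)]
        refine integral_congr_ae (.of_forall fun x => ?_)
        simp [ENNReal.toReal_div, (hpos x).le, (hpos (T.symm x)).le]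

theorem lintegral_enorm_indicator_sub_indicator {E : Type*} [NormedAddCommGroup E] {s t : Set X}
    (hs : MeasurableSet s) (ht : MeasurableSet t) (c : E) :
    ∫⁻ x, ‖t.indicator (fun _ => c) x - s.indicator (fun _ => c) x‖ₑ ∂ν
      = ‖c‖ₑ * ν (symmDiff s t) := by
  simp_rw [enorm_indicator_sub_indicator]
  exact lintegral_indicator_const (hs.symmDiff ht) _

theorem measure_symmDiff_image_ne_top (hT : MeasurePreserving T ν ν) {s : Set X} (hνs : ν s ≠ ∞) :
    ν (symmDiff s (T '' s)) ≠ ∞ := by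
  refine ((measure_mono symmDiff_le_sup).trans (measure_union_le _ _)).trans_lt ?_ |>.ne
  rw [measure_image_of_measurePreserving hT]
  exact ENNReal.add_lt_top.mpr ⟨hνs.lt_top, hνs.lt_top⟩

theorem integral_abs_rnDeriv_map_sub_one [SigmaFinite ν] (hT : MeasurePreserving T ν ν)
    {f : X → ℝ} (hf : Measurable f) (hpos : ∀ x, 0 < f x) {μ : Measure X}
    (hμ : μ = ν.withDensity fun x => ENNReal.ofReal (f x)) :
    ∫ x, |((μ.map T).rnDeriv μ x).toReal - 1| ∂μ = ∫ x, |f (T.symm x) - f x| ∂ν := by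
  rw [integral_comp_rnDeriv_map_withDensity hT hf hpos hμ fun r => |r - 1|]
  refine integral_congr_ae (.of_forall fun x => ?_)
  dsimp only
  rw [div_sub_one (hpos x).ne', abs_div, abs_of_pos (hpos x), mul_div_cancel₀ _ (hpos x).ne']

theorem integral_rnDeriv_map_sub_one [SigmaFinite ν] (hT : MeasurePreserving T ν ν)
    {f : X → ℝ} (hf : Measurable f) (hpos : ∀ x, 0 < f x) {μ : Measure X}
    (hμ : μ = ν.withDensity fun x => ENNReal.ofReal (f x)) :
    ∫ x, (((μ.map T).rnDeriv μ x).toReal - 1) ∂μ = ∫ x, (f (T.symm x) - f x) ∂ν := by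
  rw [integral_comp_rnDeriv_map_withDensity hT hf hpos hμ fun r => r - 1]
  refine integral_congr_ae (.of_forall fun x => ?_)
  dsimp only
  rw [mul_sub, mul_div_cancel₀ _ (hpos x).ne', mul_one]

end MeasurePreserving

theorem support_indicator_image_sub_indicator_subset {ι X M : Type*} [AddGroup M] {T : X → X}
    {s Y : ι → Set X} (hs : ∀ i, s i ⊆ Y i) (hY : ∀ i, T '' Y i = Y i) (c : ι → M) (i : ι) :
    Function.support
      (fun x => (T '' s i).indicator (fun _ => c i) x - (s i).indicator (fun _ => c i) x) ⊆ Y i :=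
  (Function.support_sub _ _).trans (Set.union_subset
    (Set.support_indicator_subset.trans ((Set.image_mono (hs i)).trans (hY i).le))
    (Set.support_indicator_subset.trans (hs i)))

section StepDensity

variable {X : Type*} {Xn A : ℕ → Set X} {l : ℕ → ℝ} {f : X → ℝ}

theorem hasSum_step_density (hXdisj : Pairwise (Function.onFun Disjoint Xn))
    (hA : ∀ n, A n ⊆ Xn n) {x : X} {m : ℕ} (hx : x ∈ Xn m) :
    HasSum (fun n => (l n - 1) * (A n).indicator 1 x) ((A m).indicator (fun _ => l m - 1) x) := by
  convert hasSum_of_support_subset_partition (g := fun n y => (l n - 1) * (A n).indicator 1 y)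
    hXdisj (fun n => (Function.support_mul_subset_right _ _).trans
      (Set.support_indicator_subset.trans (hA n))) hx using 1
  by_cases h : x ∈ A m <;> simp [h]

theorem density_eq_of_mem (hXdisj : Pairwise (Function.onFun Disjoint Xn))
    (hA : ∀ n, A n ⊆ Xn n) (hf : ∀ x, f x = 1 + ∑' n, (l n - 1) * (A n).indicator 1 x)
    {x : X} {m : ℕ} (hx : x ∈ Xn m) :
    f x = 1 + (A m).indicator (fun _ => l m - 1) x := by
  rw [hf, (hasSum_step_density hXdisj hA hx).tsum_eq]

theorem density_pos (hXdisj : Pairwise (Function.onFun Disjoint Xn))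
    (hXcover : (⋃ n, Xn n) = Set.univ) (hA : ∀ n, A n ⊆ Xn n) (hl : ∀ n, 0 < l n)
    (hf : ∀ x, f x = 1 + ∑' n, (l n - 1) * (A n).indicator 1 x) (x : X) : 0 < f x := by
  obtain ⟨m, hm⟩ := Set.mem_iUnion.mp (hXcover ▸ Set.mem_univ x)
  rw [density_eq_of_mem hXdisj hA hf hm]
  by_cases h : x ∈ A m <;> simp [h, hl m]

theorem measurable_density [MeasurableSpace X] (hXdisj : Pairwise (Function.onFun Disjoint Xn))
    (hXcover : (⋃ n, Xn n) = Set.univ) (hAm : ∀ n, MeasurableSet (A n)) (hA : ∀ n, A n ⊆ Xn n)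
    (hf : ∀ x, f x = 1 + ∑' n, (l n - 1) * (A n).indicator 1 x) : Measurable f := by
  rw [funext hf]
  refine measurable_const.add (measurable_tsum_of_summable
    (fun n => measurable_const.mul (measurable_const.indicator (hAm n))) fun x => ?_)
  obtain ⟨m, hm⟩ := Set.mem_iUnion.mp (hXcover ▸ Set.mem_univ x)
  exact (hasSum_step_density hXdisj hA hm).summable

theorem density_symm_sub_density_eq_tsum [MeasurableSpace X] {T : X ≃ᵐ X}
    (hXdisj : Pairwise (Function.onFun Disjoint Xn)) (hXcover : (⋃ n, Xn n) = Set.univ)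
    (hXinv : ∀ n, T '' Xn n = Xn n) (hA : ∀ n, A n ⊆ Xn n)
    (hf : ∀ x, f x = 1 + ∑' n, (l n - 1) * (A n).indicator 1 x) (x : X) :
    f (T.symm x) - f x = ∑' n,
      ((T '' A n).indicator (fun _ => l n - 1) x - (A n).indicator (fun _ => l n - 1) x) := by
  obtain ⟨m, hm⟩ := Set.mem_iUnion.mp (hXcover ▸ Set.mem_univ x)
  have hsymm : T.symm x ∈ Xn m := by
    rw [← Set.mem_preimage, ← T.image_eq_preimage_symm, hXinv m]
    exact hm
  refine Eq.trans ?_ (hasSum_of_support_subset_partition hXdisj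
    (support_indicator_image_sub_indicator_subset hA hXinv fun n => l n - 1) hm).tsum_eq.symm
  rw [density_eq_of_mem hXdisj hA hf hm, density_eq_of_mem hXdisj hA hf hsymm,
    T.image_eq_preimage_symm, ← Set.indicator_comp_right (f := T.symm) (g := fun _ => l m - 1),
    Function.comp_def]
  ring

theorem lintegral_enorm_density_symm_sub_density [MeasurableSpace X] (ν : Measure X) {T : X ≃ᵐ X}
    (hXdisj : Pairwise (Function.onFun Disjoint Xn)) (hXcover : (⋃ n, Xn n) = Set.univ)
    (hXinv : ∀ n, T '' Xn n = Xn n) (hAm : ∀ n, MeasurableSet (A n)) (hA : ∀ n, A n ⊆ Xn n)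
    (hf : ∀ x, f x = 1 + ∑' n, (l n - 1) * (A n).indicator 1 x) :
    ∫⁻ x, ‖f (T.symm x) - f x‖ₑ ∂ν = ∑' n, ‖l n - 1‖ₑ * ν (symmDiff (A n) (T '' A n)) := by
  have hTAm : ∀ n, MeasurableSet (T '' A n) := fun n => T.measurableSet_image.mpr (hAm n)
  calc ∫⁻ x, ‖f (T.symm x) - f x‖ₑ ∂ν
      = ∫⁻ x, ∑' n, ‖(T '' A n).indicator (fun _ => l n - 1) x
          - (A n).indicator (fun _ => l n - 1) x‖ₑ ∂ν := by
        refine lintegral_congr fun x => ?_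
        obtain ⟨m, hm⟩ := Set.mem_iUnion.mp (hXcover ▸ Set.mem_univ x)
        rw [density_symm_sub_density_eq_tsum hXdisj hXcover hXinv hA hf x]
        exact enorm_tsum_of_support_subset_partition hXdisj
          (support_indicator_image_sub_indicator_subset hA hXinv fun n => l n - 1) hm
    _ = ∑' n, ‖l n - 1‖ₑ * ν (symmDiff (A n) (T '' A n)) := by
        refine (lintegral_tsum fun n => Measurable.aemeasurable ?_).trans
          (tsum_congr fun n => lintegral_enorm_indicator_sub_indicator (hAm n) (hTAm n) _)
        exact ((measurable_const.indicator (hTAm n)).sub (measurable_const.indicator (hAm n))).enorm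

theorem integral_abs_density_symm_sub_density [MeasurableSpace X] {ν : Measure X} {T : X ≃ᵐ X}
    (hT : MeasurePreserving T ν ν) (hXdisj : Pairwise (Function.onFun Disjoint Xn))
    (hXcover : (⋃ n, Xn n) = Set.univ) (hXinv : ∀ n, T '' Xn n = Xn n)
    (hAm : ∀ n, MeasurableSet (A n)) (hA : ∀ n, A n ⊆ Xn n) (hAfin : ∀ n, ν (A n) < ⊤)
    (hf : ∀ x, f x = 1 + ∑' n, (l n - 1) * (A n).indicator 1 x) :
    ∫ x, |f (T.symm x) - f x| ∂ν = ∑' n, |1 - l n| * (ν (symmDiff (A n) (T '' A n))).toReal := by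
  have hfm := measurable_density hXdisj hXcover hAm hA hf
  calc ∫ x, |f (T.symm x) - f x| ∂ν
      = (∫⁻ x, ‖f (T.symm x) - f x‖ₑ ∂ν).toReal :=
        integral_norm_eq_lintegral_enorm ((hfm.comp T.symm.measurable).sub hfm).aestronglyMeasurable
    _ = (∑' n, ENNReal.ofReal (|l n - 1| * (ν (symmDiff (A n) (T '' A n))).toReal)).toReal := by
        rw [lintegral_enorm_density_symm_sub_density ν hXdisj hXcover hXinv hAm hA hf,
          tsum_congr fun n => enorm_mul_eq_ofReal_abs_mul_toReal _
            (measure_symmDiff_image_ne_top hT (hAfin n).ne)]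
    _ = ∑' n, |1 - l n| * (ν (symmDiff (A n) (T '' A n))).toReal := by
        rw [ENNReal.tsum_toReal_eq fun _ => ENNReal.ofReal_ne_top]
        exact tsum_congr fun n => by
          rw [ENNReal.toReal_ofReal (mul_nonneg (abs_nonneg _) ENNReal.toReal_nonneg), abs_sub_comm]

theorem integral_density_symm_sub_density [MeasurableSpace X] {ν : Measure X} {T : X ≃ᵐ X}
    (hT : MeasurePreserving T ν ν) (hXdisj : Pairwise (Function.onFun Disjoint Xn))
    (hXcover : (⋃ n, Xn n) = Set.univ) (hXinv : ∀ n, T '' Xn n = Xn n)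
    (hAm : ∀ n, MeasurableSet (A n)) (hA : ∀ n, A n ⊆ Xn n) (hAfin : ∀ n, ν (A n) < ⊤)
    (hf : ∀ x, f x = 1 + ∑' n, (l n - 1) * (A n).indicator 1 x)
    (hsum : Summable fun n => |1 - l n| * (ν (symmDiff (A n) (T '' A n))).toReal) :
    ∫ x, (f (T.symm x) - f x) ∂ν = 0 := by
  have hTAm : ∀ n, MeasurableSet (T '' A n) := fun n => T.measurableSet_image.mpr (hAm n)
  have hfin : ∑' n, ∫⁻ x, ‖(T '' A n).indicator (fun _ => l n - 1) x
      - (A n).indicator (fun _ => l n - 1) x‖ₑ ∂ν ≠ ∞ := by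
    rw [tsum_congr fun n => (lintegral_enorm_indicator_sub_indicator (hAm n) (hTAm n) _).trans
      (enorm_mul_eq_ofReal_abs_mul_toReal _ (measure_symmDiff_image_ne_top hT (hAfin n).ne))]
    simp_rw [abs_sub_comm (l _) 1]
    rw [← ENNReal.ofReal_tsum_of_nonneg
      (fun n => mul_nonneg (abs_nonneg _) ENNReal.toReal_nonneg) hsum]
    exact ENNReal.ofReal_ne_top
  rw [integral_congr_ae
    (.of_forall (density_symm_sub_density_eq_tsum hXdisj hXcover hXinv hA hf))]
  refine (integral_tsum (fun n => ?_) hfin).trans ?_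
  · exact ((measurable_const.indicator (hTAm n)).sub
      (measurable_const.indicator (hAm n))).aestronglyMeasurable
  simp [integral_indicator_image_sub_indicator hT (hAm _) (hAfin _).ne]

end StepDensity

theorem stmt6_general {X : Type*} [MeasurableSpace X] (ν : Measure X) [SigmaFinite ν]
    (T : X ≃ᵐ X) (hT : ν.map T = ν)
    (Xn : ℕ → Set X)
    (hXdisj : Pairwise (Function.onFun Disjoint Xn))
    (hXcover : (⋃ n, Xn n) = Set.univ)
    (hXinv : ∀ n, T '' Xn n = Xn n)
    (A : ℕ → Set X) (hAm : ∀ n, MeasurableSet (A n)) (hA : ∀ n, A n ⊆ Xn n)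
    (hAfin : ∀ n, ν (A n) < ⊤)
    (l : ℕ → ℝ) (hl : ∀ n, 0 < l n)
    (f : X → ℝ) (hf : ∀ x, f x = 1 + ∑' n, (l n - 1) * (A n).indicator 1 x)
    (μ : Measure X) (hμ : μ = ν.withDensity (fun x => ENNReal.ofReal (f x))) :
    ∫ x, |((μ.map T).rnDeriv μ x).toReal - 1| ∂μ
      = ∑' n, |1 - l n| * (ν (symmDiff (A n) (T '' A n))).toReal ∧
    (Summable (fun n => |1 - l n| * (ν (symmDiff (A n) (T '' A n))).toReal) →
      ∫ x, (((μ.map T).rnDeriv μ x).toReal - 1) ∂μ = 0) := by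
  have hTν : MeasurePreserving T ν ν := ⟨T.measurable, hT⟩
  have hfm := measurable_density hXdisj hXcover hAm hA hf
  have hpos := density_pos hXdisj hXcover hA hl hf
  refine ⟨?_, fun hsum => ?_⟩
  · rw [integral_abs_rnDeriv_map_sub_one hTν hfm hpos hμ]
    exact integral_abs_density_symm_sub_density hTν hXdisj hXcover hXinv hAm hA hAfin hf
  · rw [integral_rnDeriv_map_sub_one hTν hfm hpos hμ]
    exact integral_density_symm_sub_density hTν hXdisj hXcover hXinv hAm hA hAfin hf hsum

theorem stmt6 {X : Type*} [MeasurableSpace X] (ν : Measure X) [SigmaFinite ν]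
    (T : X ≃ᵐ X) (hT : ν.map T = ν)
    (Xn : ℕ → Set X) (hXnm : ∀ n, MeasurableSet (Xn n))
    (hXdisj : Pairwise (Function.onFun Disjoint Xn))
    (hXcover : (⋃ n, Xn n) = Set.univ)
    (hXinv : ∀ n, T '' Xn n = Xn n)
    (A : ℕ → Set X) (hAm : ∀ n, MeasurableSet (A n)) (hA : ∀ n, A n ⊆ Xn n)
    (hAfin : ∀ n, ν (A n) < ⊤)
    (l : ℕ → ℝ) (hl : ∀ n, 0 < l n)
    (f : X → ℝ) (hf : ∀ x, f x = 1 + ∑' n, (l n - 1) * (A n).indicator 1 x)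
    (μ : Measure X) (hμ : μ = ν.withDensity (fun x => ENNReal.ofReal (f x))) :
    ∫ x, |((μ.map T).rnDeriv μ x).toReal - 1| ∂μ
      = ∑' n, |1 - l n| * (ν (symmDiff (A n) (T '' A n))).toReal ∧
    (Summable (fun n => |1 - l n| * (ν (symmDiff (A n) (T '' A n))).toReal) →
      ∫ x, (((μ.map T).rnDeriv μ x).toReal - 1) ∂μ = 0) :=
  stmt6_general ν T hT Xn hXdisj hXcover hXinv A hAm hA hAfin l hl f hf μ hμ
end
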